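/- Let {f_t}_{t∈ℕ} be the online gradient descent iterates. If Assumption 1 holds and lim_{t→∞} η_t = 0, then there exist constants Ĉ, γ > 0, independent of t, such that for all t ∈ ℕ: (i) 𝔼[‖f_t − f_H‖²] ≤ Ĉ + γ ∑_{k=1}^t η_k², and (ii) 𝔼[‖∇E(f_t)‖²] ≥ (𝔼[E(f_t)] − E(f_H))² / (Ĉ + γ ∑_{k=1}^t η_k²). -/

import Mathlib

/-!
Write `d_t = f_t - f_H` and `g_t = φ'(y_t, f_t(x_t)) K_{x_t}`, so that `d_{t+1} = d_t - η_t g_t`.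
Since `z_t` is independent of `f_t`, averaging `‖d_{t+1}‖² = ‖d_t‖² - 2η_t ⟪d_t, g_t⟫ + η_t² ‖g_t‖²`
over `z_t` replaces `g_t` by `∇E(f_t)` in the middle term. By convexity
`⟪∇E(f_t), d_t⟫ ≥ E(f_t) - E(f_H) ≥ 0`. Hölder continuity of `φ'` together with `φ ≥ 0` gives the
self-bounding estimate `φ'² ≤ 2L² + 8Lφ`, so the last term averages to at most
`η_t² κ² (2L² + 8L E(f_t))`. Once `4Lκ²η_t ≤ 1` the excess risk in the last term is absorbed by the
middle one, leaving `𝔼‖d_{t+1}‖² ≤ 𝔼‖d_t‖² + γ η_t²`; the finitely many earlier steps go into `Ĉ`.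
Part (ii) is Cauchy–Schwarz applied to `E(f_t) - E(f_H) ≤ ‖∇E(f_t)‖ ‖d_t‖`.
-/

open MeasureTheory ProbabilityTheory Filter Real
open scoped RealInnerProductSpace

lemma Real.rpow_le_one_add_self {r α : ℝ} (hr : 0 ≤ r) (hα : α ∈ Set.Icc (0 : ℝ) 1) :
    r ^ α ≤ 1 + r := by
  rcases le_total r 1 with h | h
  · linarith [Real.rpow_le_one hr h hα.1]
  · linarith [(Real.rpow_le_rpow_of_exponent_le h hα.2).trans_eq (Real.rpow_one r)]

lemma ConvexOn.add_deriv_mul_sub_le {g g' : ℝ → ℝ} (hconv : ConvexOn ℝ Set.univ g)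
    (hg : ∀ s, HasDerivAt g (g' s) s) (a b : ℝ) : g a + g' a * (b - a) ≤ g b := by
  rcases lt_trichotomy a b with h | rfl | h
  · have := hconv.le_slope_of_hasDerivAt trivial trivial h (hg a)
    rw [slope_def_field, le_div_iff₀ (sub_pos.mpr h)] at this
    linarith
  · simp
  · have := hconv.slope_le_of_hasDerivAt trivial trivial h (hg a)
    rw [slope_def_field, div_le_iff₀ (sub_pos.mpr h)] at this
    linarith

section HolderDerivative

variable {g g' : ℝ → ℝ} {L α : ℝ}

lemma abs_sub_sub_deriv_mul_le_of_holder (hL : 0 ≤ L) (hα : 0 ≤ α)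
    (hg : ∀ s, HasDerivAt g (g' s) s) (hg' : ∀ s t, |g' s - g' t| ≤ L * |s - t| ^ α)
    (a b : ℝ) : |g b - g a - g' a * (b - a)| ≤ L * |b - a| ^ α * |b - a| := by
  have hderiv : ∀ x ∈ Set.uIcc a b, HasDerivWithinAt (fun x => g x - g' a * x)
      (g' x - g' a) (Set.uIcc a b) x := fun x _ => by
    have hlin : HasDerivAt (fun x => g' a * x) (g' a) x := by
      simpa using (hasDerivAt_id' x).const_mul (g' a)
    exact ((hg x).sub hlin).hasDerivWithinAt
  have hbound : ∀ x ∈ Set.uIcc a b, ‖g' x - g' a‖ ≤ L * |b - a| ^ α := fun x hx =>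
    (hg' x a).trans (mul_le_mul_of_nonneg_left
      (Real.rpow_le_rpow (abs_nonneg _) (Set.abs_sub_left_of_mem_uIcc hx) hα) hL)
  have := (convex_uIcc a b).norm_image_sub_le_of_norm_hasDerivWithin_le hderiv hbound
    Set.left_mem_uIcc Set.right_mem_uIcc
  rw [Real.norm_eq_abs, Real.norm_eq_abs] at this
  convert this using 2
  ring

lemma abs_deriv_mul_le_of_holder (hL : 0 ≤ L) (hα : 0 ≤ α) (hg0 : ∀ s, 0 ≤ g s)
    (hg : ∀ s, HasDerivAt g (g' s) s) (hg' : ∀ s t, |g' s - g' t| ≤ L * |s - t| ^ α)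
    (s : ℝ) {r : ℝ} (hr : 0 ≤ r) : |g' s| * r ≤ g s + L * r ^ α * r := by
  -- step a distance `r` downhill and use `0 ≤ g`
  have hup := (abs_le.mp (abs_sub_sub_deriv_mul_le_of_holder hL hα hg hg' s (s + r))).2
  have hdown := (abs_le.mp (abs_sub_sub_deriv_mul_le_of_holder hL hα hg hg' s (s - r))).2
  simp only [add_sub_cancel_left, sub_sub_cancel_left, abs_neg, abs_of_nonneg hr] at hup hdown
  rcases abs_cases (g' s) with ⟨h, -⟩ | ⟨h, -⟩ <;> rw [h] <;>
    linarith [hg0 (s + r), hg0 (s - r)]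

lemma sq_deriv_le_of_holder (hL : 0 < L) (hα : α ∈ Set.Icc (0 : ℝ) 1) (hg0 : ∀ s, 0 ≤ g s)
    (hg : ∀ s, HasDerivAt g (g' s) s) (hg' : ∀ s t, |g' s - g' t| ≤ L * |s - t| ^ α)
    (s : ℝ) : g' s ^ 2 ≤ 2 * L ^ 2 + 8 * L * g s := by
  have hquad : ∀ r, 0 ≤ r → |g' s| * r ≤ g s + L * r + L * r ^ 2 := fun r hr => by
    have h1 := abs_deriv_mul_le_of_holder hL.le hα.1 hg0 hg hg' s hr
    have h2 := mul_le_mul_of_nonneg_right (Real.rpow_le_one_add_self hr hα) hr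
    nlinarith
  rw [← sq_abs]
  rcases le_total |g' s| L with h | h
  · nlinarith [hg0 s, abs_nonneg (g' s)]
  · -- optimise the quadratic bound at `r = (|g' s| - L) / (2 L)`
    set r := (|g' s| - L) / (2 * L) with hr
    have hr0 : 0 ≤ r := div_nonneg (by linarith) (by linarith)
    have hu : |g' s| = L + 2 * L * r := by rw [hr]; field_simp; ring
    have := hquad r hr0
    rw [hu] at this ⊢
    nlinarith [sq_nonneg (1 - 2 * r), mul_pos hL hL]

lemma abs_deriv_le_of_holder (hL : 0 ≤ L) (hα : α ∈ Set.Icc (0 : ℝ) 1) (hg0 : ∀ s, 0 ≤ g s)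
    (hg : ∀ s, HasDerivAt g (g' s) s) (hg' : ∀ s t, |g' s - g' t| ≤ L * |s - t| ^ α)
    (s : ℝ) : |g' s| ≤ g 0 + 2 * L + L * |s| := by
  have h0 := abs_deriv_mul_le_of_holder hL hα.1 hg0 hg hg' 0 zero_le_one
  rw [Real.one_rpow, mul_one, mul_one, mul_one] at h0
  have hs : |g' s - g' 0| ≤ L * (1 + |s|) := by
    refine (hg' s 0).trans (mul_le_mul_of_nonneg_left ?_ hL)
    simpa using Real.rpow_le_one_add_self (abs_nonneg s) hα
  linarith [abs_sub_abs_le_abs_sub (g' s) (g' 0)]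

end HolderDerivative

lemma sq_integral_mul_le_integral_sq_mul_integral_sq {α : Type*} [MeasurableSpace α]
    {μ : Measure α} {f g : α → ℝ} (hf0 : 0 ≤ᵐ[μ] f) (hg0 : 0 ≤ᵐ[μ] g) (hf : MemLp f 2 μ)
    (hg : MemLp g 2 μ) :
    (∫ a, f a * g a ∂μ) ^ 2 ≤ (∫ a, f a ^ 2 ∂μ) * ∫ a, g a ^ 2 ∂μ := by
  have holder := integral_mul_le_Lp_mul_Lq_of_nonneg Real.HolderConjugate.two_two hf0 hg0
    (by simpa using hf) (by simpa using hg)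
  simp only [Real.rpow_two, ← Real.sqrt_eq_rpow] at holder
  have hfg : 0 ≤ ∫ a, f a * g a ∂μ :=
    integral_nonneg_of_ae (by filter_upwards [hf0, hg0] with a ha hb using mul_nonneg ha hb)
  calc (∫ a, f a * g a ∂μ) ^ 2
      ≤ (√(∫ a, f a ^ 2 ∂μ) * √(∫ a, g a ^ 2 ∂μ)) ^ 2 := pow_le_pow_left₀ hfg holder 2
    _ = (∫ a, f a ^ 2 ∂μ) * ∫ a, g a ^ 2 ∂μ := by
      rw [mul_pow, Real.sq_sqrt (integral_nonneg fun a => sq_nonneg _),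
        Real.sq_sqrt (integral_nonneg fun a => sq_nonneg _)]

section Independence

variable {Ω β γ : Type*} [mβ : MeasurableSpace β] [MeasurableSpace γ]

lemma measurable_iSup_comap_lt_of_eq_succ {zs : ℕ → Ω → β} {U : ℕ → γ → β → γ}
    (hU : ∀ t, Measurable (Function.uncurry (U t))) {f : ℕ → Ω → γ} {c : γ}
    (hf1 : ∀ ω, f 1 ω = c) (hf : ∀ t, 1 ≤ t → ∀ ω, f (t + 1) ω = U t (f t ω) (zs t ω))
    {t : ℕ} (ht : 1 ≤ t) : Measurable[⨆ k < t, mβ.comap (zs k)] (f t) := by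
  induction t, ht using Nat.le_induction with
  | base => rw [funext hf1]; exact measurable_const
  | succ t ht ih =>
    rw [funext (hf t ht)]
    have hpast : (⨆ k < t, mβ.comap (zs k)) ≤ ⨆ k < t + 1, mβ.comap (zs k) :=
      biSup_mono fun k hk => Nat.lt_succ_of_lt hk
    have hnow : Measurable[⨆ k < t + 1, mβ.comap (zs k)] (zs t) :=
      (comap_measurable (zs t)).mono
        (le_iSup₂ (f := fun k (_ : k < t + 1) => mβ.comap (zs k)) t t.lt_succ_self) le_rfl
    exact (hU t).comp ((ih.mono hpast le_rfl).prodMk hnow)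

variable [MeasurableSpace Ω] {P : Measure Ω}

lemma ProbabilityTheory.IndepFun.integral_comp_eq_integral_integral {E : Type*}
    [NormedAddCommGroup E] [NormedSpace ℝ E] [IsFiniteMeasure P] {W : Ω → γ} {V : Ω → β}
    (hind : IndepFun W V P) (hW : Measurable W) (hV : Measurable V) {G : γ → β → E}
    (hG : StronglyMeasurable (Function.uncurry G)) (hint : Integrable (fun ω => G (W ω) (V ω)) P) :
    ∫ ω, G (W ω) (V ω) ∂P = ∫ ω, ∫ b, G (W ω) b ∂(P.map V) ∂P := by
  have hmap : P.map (fun ω => (W ω, V ω)) = (P.map W).prod (P.map V) :=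
    (indepFun_iff_map_prod_eq_prod_map_map hW.aemeasurable hV.aemeasurable).mp hind
  have hint' : Integrable (Function.uncurry G) ((P.map W).prod (P.map V)) := by
    rw [← hmap]
    exact (integrable_map_measure hG.aestronglyMeasurable (hW.prodMk hV).aemeasurable).mpr hint
  calc ∫ ω, G (W ω) (V ω) ∂P
      = ∫ p, Function.uncurry G p ∂(P.map fun ω => (W ω, V ω)) :=
        (integral_map (hW.prodMk hV).aemeasurable hG.aestronglyMeasurable).symm
    _ = ∫ a, ∫ b, G a b ∂(P.map V) ∂(P.map W) := by rw [hmap]; exact integral_prod _ hint'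
    _ = ∫ ω, ∫ b, G (W ω) b ∂(P.map V) ∂P :=
        integral_map hW.aemeasurable hG.integral_prod_right'.aestronglyMeasurable

lemma ProbabilityTheory.iIndepFun.indepFun_of_measurable_iSup_comap_lt {zs : ℕ → Ω → β}
    (hind : iIndepFun zs P) (hzs : ∀ t, Measurable (zs t)) {t : ℕ} {W : Ω → γ}
    (hW : Measurable[⨆ k < t, mβ.comap (zs k)] W) : IndepFun W (zs t) P := by
  rw [IndepFun_iff_Indep]
  have hpast := indep_iSup_of_disjoint (fun k => (hzs k).comap_le) hind.iIndep
    (S := Set.Iio t) (T := {t}) (by simp)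
  rw [iSup_singleton] at hpast
  exact indep_of_indep_of_le_left hpast hW.comap_le

end Independence

lemma exists_le_add_mul_sum_of_eventually_le {D a : ℕ → ℝ} {γ : ℝ} (hγ : 0 ≤ γ)
    (ha : ∀ k, 0 ≤ a k) (hstep : ∀ᶠ t in atTop, D (t + 1) ≤ D t + γ * a t) :
    ∃ C, 0 < C ∧ ∀ t, D t ≤ C + γ * ∑ k ∈ Finset.Icc 1 t, a k := by
  obtain ⟨N, hN⟩ := eventually_atTop.mp (hstep.and (eventually_ge_atTop 1))
  set C := 1 + ∑ k ∈ Finset.range (N + 1), |D k|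
  have hsum : ∀ t, 0 ≤ γ * ∑ k ∈ Finset.Ico 1 t, a k := fun t =>
    mul_nonneg hγ (Finset.sum_nonneg fun k _ => ha k)
  have hinit : ∀ t ≤ N, D t ≤ C := fun t ht =>
    (le_abs_self _).trans <| (Finset.single_le_sum (fun k _ => abs_nonneg (D k))
      (Finset.mem_range.2 (Nat.lt_succ_of_le ht))).trans (le_add_of_nonneg_left zero_le_one)
  have hbound : ∀ t, D t ≤ C + γ * ∑ k ∈ Finset.Ico 1 t, a k := fun t => by
    rcases le_total t N with ht | ht
    · linarith [hinit t ht, hsum t]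
    induction t, ht using Nat.le_induction with
    | base => linarith [hinit N le_rfl, hsum N]
    | succ t ht ih =>
      obtain ⟨hD, ht1⟩ := hN t ht
      rw [Finset.sum_Ico_succ_top ht1, mul_add]
      linarith
  refine ⟨C, by positivity, fun t => (hbound t).trans (add_le_add le_rfl ?_)⟩
  exact mul_le_mul_of_nonneg_left
    (Finset.sum_le_sum_of_subset_of_nonneg Finset.Ico_subset_Icc_self fun k _ _ => ha k) hγ

structure IsHolderSmoothConvexLoss (g g' : ℝ → ℝ) (L α : ℝ) : Prop where
  nonneg : ∀ s, 0 ≤ g s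
  convexOn : ConvexOn ℝ Set.univ g
  hasDerivAt : ∀ s, HasDerivAt g (g' s) s
  holder : ∀ s t, |g' s - g' t| ≤ L * |s - t| ^ α

namespace LinearPredictor

variable {Z H : Type*} [NormedAddCommGroup H] [InnerProductSpace ℝ H]

def sgdStep (ℓ' : Z → ℝ → ℝ) (k : Z → H) (η : ℝ) (g : H) (z : Z) : H :=
  g - (η * ℓ' z ⟪g, k z⟫) • k z

variable {ℓ ℓ' : Z → ℝ → ℝ} {k : Z → H} {L α κ M₀ : ℝ}

lemma norm_deriv_smul_le (hℓ : ∀ z, IsHolderSmoothConvexLoss (ℓ z) (ℓ' z) L α) (hL : 0 ≤ L)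
    (hα : α ∈ Set.Icc (0 : ℝ) 1) (hk : ∀ z, ‖k z‖ ≤ κ) (hM₀ : ∀ z, ℓ z 0 ≤ M₀) (g : H) (z : Z) :
    ‖ℓ' z ⟪g, k z⟫ • k z‖ ≤ κ * (M₀ + 2 * L) + L * κ ^ 2 * ‖g‖ := by
  have hinner : |⟪g, k z⟫| ≤ ‖g‖ * κ :=
    (abs_real_inner_le_norm _ _).trans (mul_le_mul_of_nonneg_left (hk z) (norm_nonneg g))
  have hderiv : |ℓ' z ⟪g, k z⟫| ≤ M₀ + 2 * L + L * (‖g‖ * κ) :=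
    (abs_deriv_le_of_holder hL hα (hℓ z).nonneg (hℓ z).hasDerivAt (hℓ z).holder _).trans
      (by linarith [hM₀ z, mul_le_mul_of_nonneg_left hinner hL])
  rw [norm_smul, Real.norm_eq_abs]
  calc |ℓ' z ⟪g, k z⟫| * ‖k z‖ ≤ (M₀ + 2 * L + L * (‖g‖ * κ)) * κ :=
        mul_le_mul hderiv (hk z) (norm_nonneg _) ((abs_nonneg _).trans hderiv)
    _ = κ * (M₀ + 2 * L) + L * κ ^ 2 * ‖g‖ := by ring

lemma norm_deriv_smul_sq_le (hℓ : ∀ z, IsHolderSmoothConvexLoss (ℓ z) (ℓ' z) L α) (hL : 0 < L)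
    (hα : α ∈ Set.Icc (0 : ℝ) 1) (hk : ∀ z, ‖k z‖ ≤ κ) (g : H) (z : Z) :
    ‖ℓ' z ⟪g, k z⟫ • k z‖ ^ 2 ≤ κ ^ 2 * (2 * L ^ 2 + 8 * L * ℓ z ⟪g, k z⟫) := by
  have hsq := sq_deriv_le_of_holder hL hα (hℓ z).nonneg (hℓ z).hasDerivAt (hℓ z).holder ⟪g, k z⟫
  have hk2 : ‖k z‖ ^ 2 ≤ κ ^ 2 := pow_le_pow_left₀ (norm_nonneg _) (hk z) 2
  rw [norm_smul, mul_pow, Real.norm_eq_abs, sq_abs, mul_comm (κ ^ 2)]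
  exact mul_le_mul hsq hk2 (sq_nonneg _) ((sq_nonneg _).trans hsq)

lemma norm_sgdStep_le (hℓ : ∀ z, IsHolderSmoothConvexLoss (ℓ z) (ℓ' z) L α) (hL : 0 ≤ L)
    (hα : α ∈ Set.Icc (0 : ℝ) 1) (hk : ∀ z, ‖k z‖ ≤ κ) (hM₀ : ∀ z, ℓ z 0 ≤ M₀) {η : ℝ}
    (hη : 0 ≤ η) (g : H) (z : Z) :
    ‖sgdStep ℓ' k η g z‖ ≤ ‖g‖ + η * (κ * (M₀ + 2 * L) + L * κ ^ 2 * ‖g‖) := by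
  rw [sgdStep, mul_smul]
  refine (norm_sub_le _ _).trans (add_le_add le_rfl ?_)
  rw [norm_smul, Real.norm_eq_abs, abs_of_nonneg hη]
  exact mul_le_mul_of_nonneg_left (norm_deriv_smul_le hℓ hL hα hk hM₀ g z) hη

lemma exists_forall_norm_le_of_eq_sgdStep {Ω : Type*} {zs : ℕ → Ω → Z} {f : ℕ → Ω → H}
    {η : ℕ → ℝ} (hℓ : ∀ z, IsHolderSmoothConvexLoss (ℓ z) (ℓ' z) L α) (hL : 0 ≤ L)
    (hα : α ∈ Set.Icc (0 : ℝ) 1) (hk : ∀ z, ‖k z‖ ≤ κ) (hM₀ : ∀ z, ℓ z 0 ≤ M₀)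
    (hη : ∀ t, 0 ≤ η t) {c : H} (hf1 : ∀ ω, f 1 ω = c)
    (hf : ∀ t, 1 ≤ t → ∀ ω, f (t + 1) ω = sgdStep ℓ' k (η t) (f t ω) (zs t ω))
    {t : ℕ} (ht : 1 ≤ t) : ∃ B, ∀ ω, ‖f t ω‖ ≤ B := by
  induction t, ht using Nat.le_induction with
  | base => exact ⟨‖c‖, fun ω => by rw [hf1]⟩
  | succ t ht ih =>
    obtain ⟨B, hB⟩ := ih
    refine ⟨B + η t * (κ * (M₀ + 2 * L) + L * κ ^ 2 * B), fun ω => ?_⟩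
    rw [hf t ht]
    refine (norm_sgdStep_le hℓ hL hα hk hM₀ (hη t) _ _).trans ?_
    exact add_le_add (hB ω) (mul_le_mul_of_nonneg_left
      (add_le_add le_rfl (mul_le_mul_of_nonneg_left (hB ω) (mul_nonneg hL (sq_nonneg κ)))) (hη t))

variable [MeasurableSpace Z] {ρ : Measure Z}

noncomputable def risk (ρ : Measure Z) (ℓ : Z → ℝ → ℝ) (k : Z → H) (g : H) : ℝ :=
  ∫ z, ℓ z ⟪g, k z⟫ ∂ρ

noncomputable def riskGrad (ρ : Measure Z) (ℓ' : Z → ℝ → ℝ) (k : Z → H) (g : H) : H :=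
  ∫ z, ℓ' z ⟪g, k z⟫ • k z ∂ρ

section Measurability

variable [MeasurableSpace H] [BorelSpace H] [SecondCountableTopology H]

lemma measurable_risk [SFinite ρ] (hℓ : Measurable (Function.uncurry ℓ)) (hk : Measurable k) :
    Measurable (risk ρ ℓ k) :=
  (hℓ.comp (measurable_snd.prodMk (measurable_fst.inner (hk.comp measurable_snd))))
    |>.stronglyMeasurable.integral_prod_right' |>.measurable

lemma measurable_riskGrad [SFinite ρ] (hℓ' : Measurable (Function.uncurry ℓ'))
    (hk : Measurable k) : Measurable (riskGrad ρ ℓ' k) :=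
  ((hℓ'.comp (measurable_snd.prodMk (measurable_fst.inner (hk.comp measurable_snd)))).smul
    (hk.comp measurable_snd)) |>.stronglyMeasurable.integral_prod_right' |>.measurable

lemma measurable_sgdStep (hℓ' : Measurable (Function.uncurry ℓ')) (hk : Measurable k) (η : ℝ) :
    Measurable (Function.uncurry (sgdStep ℓ' k η)) :=
  measurable_fst.sub ((measurable_const.mul (hℓ'.comp (measurable_snd.prodMk
    (measurable_fst.inner (hk.comp measurable_snd))))).smul (hk.comp measurable_snd))

end Measurability

lemma norm_riskGrad_le [IsProbabilityMeasure ρ]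
    (hℓ : ∀ z, IsHolderSmoothConvexLoss (ℓ z) (ℓ' z) L α) (hL : 0 ≤ L)
    (hα : α ∈ Set.Icc (0 : ℝ) 1) (hk : ∀ z, ‖k z‖ ≤ κ) (hM₀ : ∀ z, ℓ z 0 ≤ M₀) (g : H) :
    ‖riskGrad ρ ℓ' k g‖ ≤ κ * (M₀ + 2 * L) + L * κ ^ 2 * ‖g‖ := by
  unfold riskGrad
  simpa using norm_integral_le_of_norm_le_const (μ := ρ)
    (ae_of_all _ (norm_deriv_smul_le hℓ hL hα hk hM₀ g))

lemma risk_nonneg (hℓ : ∀ z, IsHolderSmoothConvexLoss (ℓ z) (ℓ' z) L α) (g : H) :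
    0 ≤ risk ρ ℓ k g :=
  integral_nonneg fun z => (hℓ z).nonneg _

variable [CompleteSpace H]

lemma risk_add_inner_riskGrad_le (hℓ : ∀ z, IsHolderSmoothConvexLoss (ℓ z) (ℓ' z) L α)
    (hint : ∀ g, Integrable (fun z => ℓ z ⟪g, k z⟫) ρ)
    (hgint : ∀ g, Integrable (fun z => ℓ' z ⟪g, k z⟫ • k z) ρ) (g h : H) :
    risk ρ ℓ k g + ⟪riskGrad ρ ℓ' k g, h - g⟫ ≤ risk ρ ℓ k h := by
  have hpt : ∀ z, ℓ z ⟪g, k z⟫ + ⟪h - g, ℓ' z ⟪g, k z⟫ • k z⟫ ≤ ℓ z ⟪h, k z⟫ := fun z => by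
    rw [real_inner_smul_right, inner_sub_left]
    exact (hℓ z).convexOn.add_deriv_mul_sub_le (hℓ z).hasDerivAt _ _
  have := integral_mono (f := fun z => ℓ z ⟪g, k z⟫ + ⟪h - g, ℓ' z ⟪g, k z⟫ • k z⟫)
    ((hint g).add ((hgint g).const_inner (h - g))) (hint h) hpt
  rwa [integral_add (hint g) ((hgint g).const_inner _), integral_inner (hgint g),
    real_inner_comm] at this

lemma risk_le [IsProbabilityMeasure ρ] (hℓ : ∀ z, IsHolderSmoothConvexLoss (ℓ z) (ℓ' z) L α)
    (hM₀ : ∀ z, ℓ z 0 ≤ M₀) (hint : ∀ g, Integrable (fun z => ℓ z ⟪g, k z⟫) ρ)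
    (hgint : ∀ g, Integrable (fun z => ℓ' z ⟪g, k z⟫ • k z) ρ) (g : H) :
    risk ρ ℓ k g ≤ M₀ + ‖riskGrad ρ ℓ' k g‖ * ‖g‖ := by
  have htan := risk_add_inner_riskGrad_le hℓ hint hgint g 0
  have hrisk0 : risk ρ ℓ k 0 ≤ M₀ := by
    simpa [risk] using integral_mono (hint 0) (integrable_const M₀) fun z => by simpa using hM₀ z
  rw [zero_sub, inner_neg_right] at htan
  linarith [real_inner_le_norm (riskGrad ρ ℓ' k g) g]

lemma integral_norm_sgdStep_sub_sq_le [IsProbabilityMeasure ρ]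
    (hℓ : ∀ z, IsHolderSmoothConvexLoss (ℓ z) (ℓ' z) L α) (hL : 0 < L)
    (hα : α ∈ Set.Icc (0 : ℝ) 1) (hk : ∀ z, ‖k z‖ ≤ κ)
    (hint : ∀ g, Integrable (fun z => ℓ z ⟪g, k z⟫) ρ)
    (hgint : ∀ g, Integrable (fun z => ℓ' z ⟪g, k z⟫ • k z) ρ) {fH : H}
    (hmin : ∀ g, risk ρ ℓ k fH ≤ risk ρ ℓ k g) {η : ℝ} (hη : 0 ≤ η)
    (hηsmall : 4 * L * κ ^ 2 * η ≤ 1) (g : H) :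
    ∫ z, ‖sgdStep ℓ' k η g z - fH‖ ^ 2 ∂ρ
      ≤ ‖g - fH‖ ^ 2 + η ^ 2 * (κ ^ 2 * (2 * L ^ 2 + 8 * L * risk ρ ℓ k fH)) := by
  have hexpand : ∀ z, ‖sgdStep ℓ' k η g z - fH‖ ^ 2 = ‖g - fH‖ ^ 2
      - 2 * η * ⟪g - fH, ℓ' z ⟪g, k z⟫ • k z⟫ + η ^ 2 * ‖ℓ' z ⟪g, k z⟫ • k z‖ ^ 2 := fun z => by
    rw [sgdStep, sub_right_comm, mul_smul, norm_sub_sq_real, real_inner_smul_right, norm_smul,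
      mul_pow, Real.norm_eq_abs, sq_abs]
    ring
  have hlinear : Integrable (fun z => ‖g - fH‖ ^ 2 + 2 * η ^ 2 * κ ^ 2 * L ^ 2
      - 2 * η * ⟪g - fH, ℓ' z ⟪g, k z⟫ • k z⟫) ρ :=
    (integrable_const _).sub (((hgint g).const_inner _).const_mul _)
  have hloss : Integrable (fun z => 8 * L * η ^ 2 * κ ^ 2 * ℓ z ⟪g, k z⟫) ρ :=
    (hint g).const_mul _
  have hpt : ∀ z, ‖sgdStep ℓ' k η g z - fH‖ ^ 2 ≤ ‖g - fH‖ ^ 2 + 2 * η ^ 2 * κ ^ 2 * L ^ 2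
      - 2 * η * ⟪g - fH, ℓ' z ⟪g, k z⟫ • k z⟫ + 8 * L * η ^ 2 * κ ^ 2 * ℓ z ⟪g, k z⟫ := fun z => by
    rw [hexpand]
    linarith [mul_le_mul_of_nonneg_left (norm_deriv_smul_sq_le hℓ hL hα hk g z) (sq_nonneg η)]
  have hmono : ∫ z, ‖sgdStep ℓ' k η g z - fH‖ ^ 2 ∂ρ ≤ ∫ z, (‖g - fH‖ ^ 2
      + 2 * η ^ 2 * κ ^ 2 * L ^ 2 - 2 * η * ⟪g - fH, ℓ' z ⟪g, k z⟫ • k z⟫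
      + 8 * L * η ^ 2 * κ ^ 2 * ℓ z ⟪g, k z⟫) ∂ρ :=
    integral_mono_of_nonneg (ae_of_all _ fun z => sq_nonneg _) (hlinear.add hloss)
      (ae_of_all _ hpt)
  rw [integral_add hlinear hloss,
    integral_sub (integrable_const _) (((hgint g).const_inner _).const_mul _),
    integral_const, integral_const_mul, integral_const_mul, integral_inner (hgint g)] at hmono
  simp only [probReal_univ, one_smul] at hmono
  have htan := risk_add_inner_riskGrad_le hℓ hint hgint g fH
  rw [← neg_sub, inner_neg_right, real_inner_comm] at htan
  have hgap := hmin g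
  simp only [risk, riskGrad] at htan hgap ⊢
  -- the descent term `-2η (risk g - risk fH)` absorbs the `8Lκ²η² (risk g - risk fH)` part
  nlinarith [mul_nonneg (mul_nonneg hη (sub_nonneg.2 hηsmall)) (sub_nonneg.2 hgap)]

section Random

variable [MeasurableSpace H] [BorelSpace H] [SecondCountableTopology H]
  {Ω : Type*} [MeasurableSpace Ω] {P : Measure Ω} [IsProbabilityMeasure P]

lemma integral_norm_sgdStep_sub_sq_le_of_indepFun [IsProbabilityMeasure ρ]
    (hℓ : ∀ z, IsHolderSmoothConvexLoss (ℓ z) (ℓ' z) L α) (hL : 0 < L)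
    (hα : α ∈ Set.Icc (0 : ℝ) 1) (hk : ∀ z, ‖k z‖ ≤ κ) (hM₀ : ∀ z, ℓ z 0 ≤ M₀)
    (hℓ'meas : Measurable (Function.uncurry ℓ')) (hkmeas : Measurable k)
    (hint : ∀ g, Integrable (fun z => ℓ z ⟪g, k z⟫) ρ)
    (hgint : ∀ g, Integrable (fun z => ℓ' z ⟪g, k z⟫ • k z) ρ) {fH : H}
    (hmin : ∀ g, risk ρ ℓ k fH ≤ risk ρ ℓ k g) {η : ℝ} (hη : 0 ≤ η)
    (hηsmall : 4 * L * κ ^ 2 * η ≤ 1) {W : Ω → H} {V : Ω → Z} (hind : IndepFun W V P)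
    (hW : Measurable W) (hV : Measurable V) (hVρ : P.map V = ρ) {B : ℝ} (hWB : ∀ ω, ‖W ω‖ ≤ B) :
    ∫ ω, ‖sgdStep ℓ' k η (W ω) (V ω) - fH‖ ^ 2 ∂P
      ≤ ∫ ω, ‖W ω - fH‖ ^ 2 ∂P + η ^ 2 * (κ ^ 2 * (2 * L ^ 2 + 8 * L * risk ρ ℓ k fH)) := by
  have hstep : Measurable fun p : H × Z => ‖sgdStep ℓ' k η p.1 p.2 - fH‖ ^ 2 :=
    ((measurable_sgdStep hℓ'meas hkmeas η).sub_const fH).norm.pow_const 2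
  have hstepB : ∀ ω, ‖sgdStep ℓ' k η (W ω) (V ω) - fH‖
      ≤ B + η * (κ * (M₀ + 2 * L) + L * κ ^ 2 * B) + ‖fH‖ := fun ω => by
    refine (norm_sub_le _ _).trans (add_le_add ?_ le_rfl)
    refine (norm_sgdStep_le hℓ hL.le hα hk hM₀ hη _ _).trans ?_
    exact add_le_add (hWB ω) (mul_le_mul_of_nonneg_left
      (add_le_add le_rfl (mul_le_mul_of_nonneg_left (hWB ω) (by positivity))) hη)
  have hWint : Integrable (fun ω => ‖W ω - fH‖ ^ 2) P :=
    Integrable.of_bound (((hW.sub_const fH).norm.pow_const 2).aestronglyMeasurable) ((B + ‖fH‖) ^ 2)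
      (ae_of_all _ fun ω => by
        rw [Real.norm_eq_abs, abs_of_nonneg (sq_nonneg _)]
        exact pow_le_pow_left₀ (norm_nonneg _) ((norm_sub_le _ _).trans (by linarith [hWB ω])) 2)
  rw [hind.integral_comp_eq_integral_integral hW hV (G := fun g z => ‖sgdStep ℓ' k η g z - fH‖ ^ 2)
    hstep.stronglyMeasurable ?_, hVρ]
  · calc ∫ ω, ∫ z, ‖sgdStep ℓ' k η (W ω) z - fH‖ ^ 2 ∂ρ ∂P
        ≤ ∫ ω, (‖W ω - fH‖ ^ 2 + η ^ 2 * (κ ^ 2 * (2 * L ^ 2 + 8 * L * risk ρ ℓ k fH))) ∂P :=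
          integral_mono_of_nonneg (ae_of_all _ fun ω => integral_nonneg fun z => sq_nonneg _)
            (hWint.add (integrable_const _)) (ae_of_all _ fun ω =>
              integral_norm_sgdStep_sub_sq_le hℓ hL hα hk hint hgint hmin hη hηsmall (W ω))
      _ = _ := by rw [integral_add hWint (integrable_const _), integral_const]; simp
  · exact Integrable.of_bound (hstep.comp (hW.prodMk hV)).aestronglyMeasurable _
      (ae_of_all _ fun ω => by
        rw [Real.norm_eq_abs, abs_of_nonneg (sq_nonneg _)]
        exact pow_le_pow_left₀ (norm_nonneg _) (hstepB ω) 2)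

lemma sq_integral_risk_sub_le [IsProbabilityMeasure ρ]
    (hℓ : ∀ z, IsHolderSmoothConvexLoss (ℓ z) (ℓ' z) L α) (hL : 0 ≤ L)
    (hα : α ∈ Set.Icc (0 : ℝ) 1) (hk : ∀ z, ‖k z‖ ≤ κ) (hM₀ : ∀ z, ℓ z 0 ≤ M₀)
    (hℓmeas : Measurable (Function.uncurry ℓ)) (hℓ'meas : Measurable (Function.uncurry ℓ'))
    (hkmeas : Measurable k) (hint : ∀ g, Integrable (fun z => ℓ z ⟪g, k z⟫) ρ)
    (hgint : ∀ g, Integrable (fun z => ℓ' z ⟪g, k z⟫ • k z) ρ) {fH : H}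
    (hmin : ∀ g, risk ρ ℓ k fH ≤ risk ρ ℓ k g) {W : Ω → H} (hW : Measurable W) {B : ℝ}
    (hWB : ∀ ω, ‖W ω‖ ≤ B) :
    (∫ ω, risk ρ ℓ k (W ω) ∂P - risk ρ ℓ k fH) ^ 2
      ≤ (∫ ω, ‖riskGrad ρ ℓ' k (W ω)‖ ^ 2 ∂P) * ∫ ω, ‖W ω - fH‖ ^ 2 ∂P := by
  set Gb := κ * (M₀ + 2 * L) + L * κ ^ 2 * B
  have hGB : ∀ ω, ‖riskGrad ρ ℓ' k (W ω)‖ ≤ Gb := fun ω =>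
    (norm_riskGrad_le hℓ hL hα hk hM₀ _).trans
      (add_le_add le_rfl (mul_le_mul_of_nonneg_left (hWB ω) (by positivity)))
  have hDB : ∀ ω, ‖W ω - fH‖ ≤ B + ‖fH‖ := fun ω =>
    (norm_sub_le _ _).trans (by linarith [hWB ω])
  have hGmeas : Measurable fun ω => ‖riskGrad ρ ℓ' k (W ω)‖ :=
    ((measurable_riskGrad hℓ'meas hkmeas).comp hW).norm
  have hDmeas : Measurable fun ω => ‖W ω - fH‖ := (hW.sub_const fH).norm
  have hgap : ∀ ω, risk ρ ℓ k (W ω) - risk ρ ℓ k fH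
      ≤ ‖riskGrad ρ ℓ' k (W ω)‖ * ‖W ω - fH‖ := fun ω => by
    have htan := risk_add_inner_riskGrad_le hℓ hint hgint (W ω) fH
    rw [← neg_sub, inner_neg_right] at htan
    linarith [real_inner_le_norm (riskGrad ρ ℓ' k (W ω)) (W ω - fH)]
  have hRint : Integrable (fun ω => risk ρ ℓ k (W ω)) P :=
    Integrable.of_bound ((measurable_risk hℓmeas hkmeas).comp hW).aestronglyMeasurable
      (M₀ + Gb * B) (ae_of_all _ fun ω => by
        rw [Real.norm_eq_abs, abs_of_nonneg (risk_nonneg hℓ _)]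
        exact (risk_le hℓ hM₀ hint hgint _).trans (add_le_add le_rfl
          (mul_le_mul (hGB ω) (hWB ω) (norm_nonneg _) ((norm_nonneg _).trans (hGB ω)))))
  have hprod : Integrable (fun ω => ‖riskGrad ρ ℓ' k (W ω)‖ * ‖W ω - fH‖) P :=
    Integrable.of_bound (hGmeas.mul hDmeas).aestronglyMeasurable (Gb * (B + ‖fH‖))
      (ae_of_all _ fun ω => by
        rw [norm_mul, norm_norm, norm_norm]
        exact mul_le_mul (hGB ω) (hDB ω) (norm_nonneg _) ((norm_nonneg _).trans (hGB ω)))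
  have hexcess : ∫ ω, risk ρ ℓ k (W ω) ∂P - risk ρ ℓ k fH
      = ∫ ω, (risk ρ ℓ k (W ω) - risk ρ ℓ k fH) ∂P := by
    rw [integral_sub hRint (integrable_const _), integral_const]
    simp
  rw [hexcess]
  calc (∫ ω, (risk ρ ℓ k (W ω) - risk ρ ℓ k fH) ∂P) ^ 2
      ≤ (∫ ω, ‖riskGrad ρ ℓ' k (W ω)‖ * ‖W ω - fH‖ ∂P) ^ 2 :=
        pow_le_pow_left₀ (integral_nonneg fun ω => sub_nonneg.2 (hmin _))
          (integral_mono (hRint.sub (integrable_const _)) hprod hgap) 2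
    _ ≤ _ := sq_integral_mul_le_integral_sq_mul_integral_sq
        (ae_of_all _ fun ω => norm_nonneg _) (ae_of_all _ fun ω => norm_nonneg _)
        (MemLp.of_bound hGmeas.aestronglyMeasurable Gb
          (ae_of_all _ fun ω => (norm_norm _).trans_le (hGB ω)))
        (MemLp.of_bound hDmeas.aestronglyMeasurable _
          (ae_of_all _ fun ω => (norm_norm _).trans_le (hDB ω)))

theorem sgd_iterate_moment_bounds [IsProbabilityMeasure ρ]
    (hℓ : ∀ z, IsHolderSmoothConvexLoss (ℓ z) (ℓ' z) L α)
    (hL : 0 < L) (hα : α ∈ Set.Icc (0 : ℝ) 1) (hk : ∀ z, ‖k z‖ ≤ κ) (hM₀ : ∀ z, ℓ z 0 ≤ M₀)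
    (hℓmeas : Measurable (Function.uncurry ℓ)) (hℓ'meas : Measurable (Function.uncurry ℓ'))
    (hkmeas : Measurable k) (hint : ∀ g, Integrable (fun z => ℓ z ⟪g, k z⟫) ρ)
    (hgint : ∀ g, Integrable (fun z => ℓ' z ⟪g, k z⟫ • k z) ρ) {fH : H}
    (hmin : ∀ g, risk ρ ℓ k fH ≤ risk ρ ℓ k g) {zs : ℕ → Ω → Z} (hzmeas : ∀ t, Measurable (zs t))
    (hzdist : ∀ t, P.map (zs t) = ρ) (hziid : iIndepFun zs P) {η : ℕ → ℝ} (hη : ∀ t, 0 ≤ η t)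
    (hη0 : Tendsto η atTop (nhds 0)) {f : ℕ → Ω → H} {c : H} (hf1 : ∀ ω, f 1 ω = c)
    (hf : ∀ t, 1 ≤ t → ∀ ω, f (t + 1) ω = sgdStep ℓ' k (η t) (f t ω) (zs t ω)) :
    ∃ C γ : ℝ, 0 < C ∧ 0 < γ ∧ ∀ t, 1 ≤ t →
      ∫ ω, ‖f t ω - fH‖ ^ 2 ∂P ≤ C + γ * ∑ j ∈ Finset.Icc 1 t, η j ^ 2 ∧
        (∫ ω, risk ρ ℓ k (f t ω) ∂P - risk ρ ℓ k fH) ^ 2 / (C + γ * ∑ j ∈ Finset.Icc 1 t, η j ^ 2)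
          ≤ ∫ ω, ‖riskGrad ρ ℓ' k (f t ω)‖ ^ 2 ∂P := by
  have hpast : ∀ t, 1 ≤ t → Measurable[⨆ j < t, MeasurableSpace.comap (zs j) inferInstance] (f t) :=
    fun t ht => measurable_iSup_comap_lt_of_eq_succ
      (fun t => measurable_sgdStep hℓ'meas hkmeas (η t)) hf1 hf ht
  have hfmeas : ∀ t, 1 ≤ t → Measurable (f t) := fun t ht =>
    (hpast t ht).mono (iSup₂_le fun j _ => (hzmeas j).comap_le) le_rfl
  have hbdd : ∀ t, 1 ≤ t → ∃ B, ∀ ω, ‖f t ω‖ ≤ B := fun t ht =>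
    exists_forall_norm_le_of_eq_sgdStep hℓ hL.le hα hk hM₀ hη hf1 hf ht
  set γ := κ ^ 2 * (2 * L ^ 2 + 8 * L * risk ρ ℓ k fH) + 1
  have hγ : 0 < γ := add_pos_of_nonneg_of_pos (mul_nonneg (sq_nonneg κ)
    (by nlinarith [risk_nonneg (ρ := ρ) (k := k) hℓ fH])) one_pos
  have hstep : ∀ᶠ t in atTop,
      ∫ ω, ‖f (t + 1) ω - fH‖ ^ 2 ∂P ≤ ∫ ω, ‖f t ω - fH‖ ^ 2 ∂P + γ * η t ^ 2 := by
    filter_upwards [(hη0.const_mul (4 * L * κ ^ 2)).eventually_lt_const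
        (by norm_num : 4 * L * κ ^ 2 * 0 < (1 : ℝ)), eventually_ge_atTop 1] with t hsmall ht
    obtain ⟨B, hB⟩ := hbdd t ht
    have := integral_norm_sgdStep_sub_sq_le_of_indepFun hℓ hL hα hk hM₀ hℓ'meas hkmeas hint hgint
      hmin (hη t) hsmall.le (hziid.indepFun_of_measurable_iSup_comap_lt hzmeas (hpast t ht))
      (hfmeas t ht) (hzmeas t) (hzdist t) hB
    rw [show f (t + 1) = fun ω => sgdStep ℓ' k (η t) (f t ω) (zs t ω) from funext (hf t ht)]
    nlinarith [sq_nonneg (η t)]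
  obtain ⟨C, hC, hD⟩ := exists_le_add_mul_sum_of_eventually_le
    (D := fun t => ∫ ω, ‖f t ω - fH‖ ^ 2 ∂P) hγ.le (fun t => sq_nonneg (η t)) hstep
  refine ⟨C, γ, hC, hγ, fun t ht => ⟨hD t, ?_⟩⟩
  obtain ⟨B, hB⟩ := hbdd t ht
  rw [div_le_iff₀ (add_pos_of_pos_of_nonneg hC
    (mul_nonneg hγ.le (Finset.sum_nonneg fun j _ => sq_nonneg (η j))))]
  exact (sq_integral_risk_sub_le hℓ hL.le hα hk hM₀ hℓmeas hℓ'meas hkmeas hint hgint hmin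
    (hfmeas t ht) hB).trans
      (mul_le_mul_of_nonneg_left (hD t) (integral_nonneg fun ω => sq_nonneg _))

end Random

end LinearPredictor

theorem iterate_moment_bounds_in_expectation_general
    {X : Type*} [MeasurableSpace X] {Y : Set ℝ}
    {H : Type*} [NormedAddCommGroup H] [InnerProductSpace ℝ H] [CompleteSpace H]
    [MeasurableSpace H] [BorelSpace H] [SecondCountableTopology H]
    (K : X → H) (hKmeas : Measurable K)
    (κ : ℝ) (hκ : ∀ x : X, ‖K x‖ ≤ κ)
    (L α : ℝ) (hL : 0 < L) (hα : α ∈ Set.Ioc (0 : ℝ) 1)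
    (φ φ' : ℝ → ℝ → ℝ)
    (hφmeas : Measurable fun p : ℝ × ℝ => φ p.1 p.2)
    (hφ'meas : Measurable fun p : ℝ × ℝ => φ' p.1 p.2)
    (hφnonneg : ∀ y ∈ Y, ∀ s : ℝ, 0 ≤ φ y s)
    (hφconv : ∀ y ∈ Y, ConvexOn ℝ Set.univ (φ y))
    (hφderiv : ∀ y ∈ Y, ∀ s : ℝ, HasDerivAt (φ y) (φ' y s) s)
    (hφholder : ∀ y ∈ Y, ∀ s t : ℝ, |φ' y s - φ' y t| ≤ L * |s - t| ^ α)
    (ρ : Measure (X × Y)) [IsProbabilityMeasure ρ]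
    (E : H → ℝ) (hE : E = fun g : H => ∫ z : X × Y, φ (z.2 : ℝ) ⟪g, K z.1⟫ ∂ρ)
    (hEint : ∀ g : H, Integrable (fun z : X × Y => φ (z.2 : ℝ) ⟪g, K z.1⟫) ρ)
    (hgint : ∀ g : H, Integrable (fun z : X × Y => φ' (z.2 : ℝ) ⟪g, K z.1⟫ • K z.1) ρ)
    (fH : H) (hmin : ∀ g : H, E fH ≤ E g)
    (M0 : ℝ) (hM0 : ∀ z : X × Y, φ (z.2 : ℝ) 0 ≤ M0)
    {Ω : Type*} [MeasurableSpace Ω] (P : Measure Ω) [IsProbabilityMeasure P]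
    (zs : ℕ → Ω → X × Y) (hzmeas : ∀ t, Measurable (zs t))
    (hzdist : ∀ t, Measure.map (zs t) P = ρ)
    (hziid : iIndepFun zs P)
    (η : ℕ → ℝ) (hηpos : ∀ t, 0 < η t)
    (f : ℕ → Ω → H) (hf1 : ∀ ω : Ω, f 1 ω = 0)
    (hfrec : ∀ t, 1 ≤ t → ∀ ω : Ω,
      f (t + 1) ω = f t ω - (η t * φ' (((zs t ω).2 : Y) : ℝ) ⟪f t ω, K (zs t ω).1⟫) • K (zs t ω).1)
    (hη0 : Tendsto η atTop (nhds 0)) :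
    ∃ C γ : ℝ, 0 < C ∧ 0 < γ ∧ ∀ t : ℕ, 1 ≤ t →
      (∫ ω, ‖f t ω - fH‖ ^ 2 ∂P) ≤ C + γ * ∑ k ∈ Finset.Icc 1 t, η k ^ 2 ∧
        ((∫ ω, E (f t ω) ∂P) - E fH) ^ 2 / (C + γ * ∑ k ∈ Finset.Icc 1 t, η k ^ 2)
          ≤ ∫ ω, ‖∫ z : X × Y, φ' (z.2 : ℝ) ⟪f t ω, K z.1⟫ • K z.1 ∂ρ‖ ^ 2 ∂P := by
  subst hE
  have hlabel : Measurable fun p : (X × Y) × ℝ => ((p.1.2 : ℝ), p.2) :=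
    (measurable_subtype_coe.comp (measurable_snd.comp measurable_fst)).prodMk measurable_snd
  exact LinearPredictor.sgd_iterate_moment_bounds (ℓ := fun z : X × Y => φ z.2)
    (ℓ' := fun z : X × Y => φ' z.2)
    (k := fun z : X × Y => K z.1)
    (fun z => ⟨hφnonneg _ z.2.2, hφconv _ z.2.2, hφderiv _ z.2.2, hφholder _ z.2.2⟩) hL
    (Set.Ioc_subset_Icc_self hα) (fun z => hκ z.1) hM0 (hφmeas.comp hlabel)
    (hφ'meas.comp hlabel) (hKmeas.comp measurable_fst) hEint hgint hmin hzmeas hzdist hziid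
    (fun t => (hηpos t).le) hη0 hf1 hfrec

/-- Lemma 4 (moment bounds for the iterates): if `η_t → 0`, there are constants `Ĉ, γ > 0`
such that `𝔼‖f_t - f_H‖² ≤ Ĉ + γ ∑_{k≤t} η_k²` and
`𝔼‖∇E(f_t)‖² ≥ (𝔼[E(f_t)] - E(f_H))² / (Ĉ + γ ∑_{k≤t} η_k²)` for all `t`. -/
theorem iterate_moment_bounds_in_expectation
    {X : Type*} [MeasurableSpace X] {Y : Set ℝ}
    {H : Type*} [NormedAddCommGroup H] [InnerProductSpace ℝ H] [CompleteSpace H]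
    [MeasurableSpace H] [BorelSpace H] [SecondCountableTopology H]
    (K : X → H) (hKmeas : Measurable K)
    (κ : ℝ) (hκ : ∀ x : X, ‖K x‖ ≤ κ)
    (L α : ℝ) (hL : 0 < L) (hα : α ∈ Set.Ioc (0 : ℝ) 1)
    (φ φ' : ℝ → ℝ → ℝ)
    (hφmeas : Measurable fun p : ℝ × ℝ => φ p.1 p.2)
    (hφ'meas : Measurable fun p : ℝ × ℝ => φ' p.1 p.2)
    (hφnonneg : ∀ y ∈ Y, ∀ s : ℝ, 0 ≤ φ y s)
    (hφconv : ∀ y ∈ Y, ConvexOn ℝ Set.univ (φ y))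
    (hφderiv : ∀ y ∈ Y, ∀ s : ℝ, HasDerivAt (φ y) (φ' y s) s)
    (hφholder : ∀ y ∈ Y, ∀ s t : ℝ, |φ' y s - φ' y t| ≤ L * |s - t| ^ α)
    (ρ : Measure (X × Y)) [IsProbabilityMeasure ρ]
    (E : H → ℝ) (hE : E = fun g : H => ∫ z : X × Y, φ (z.2 : ℝ) ⟪g, K z.1⟫ ∂ρ)
    (hEint : ∀ g : H, Integrable (fun z : X × Y => φ (z.2 : ℝ) ⟪g, K z.1⟫) ρ)
    (hgint : ∀ g : H, Integrable (fun z : X × Y => φ' (z.2 : ℝ) ⟪g, K z.1⟫ • K z.1) ρ)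
    (fH : H) (hmin : ∀ g : H, E fH ≤ E g)
    (hgradH : (∫ z : X × Y, φ' (z.2 : ℝ) ⟪fH, K z.1⟫ • K z.1 ∂ρ) = 0)
    (M0 MH : ℝ) (hM0 : ∀ z : X × Y, φ (z.2 : ℝ) 0 ≤ M0)
    (hMH : ∀ z : X × Y, φ (z.2 : ℝ) ⟪fH, K z.1⟫ ≤ MH)
    {Ω : Type*} [MeasurableSpace Ω] (P : Measure Ω) [IsProbabilityMeasure P]
    (zs : ℕ → Ω → X × Y) (hzmeas : ∀ t, Measurable (zs t))
    (hzdist : ∀ t, Measure.map (zs t) P = ρ)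
    (hziid : iIndepFun zs P)
    (η : ℕ → ℝ) (hηpos : ∀ t, 0 < η t)
    (f : ℕ → Ω → H) (hf1 : ∀ ω : Ω, f 1 ω = 0)
    (hfrec : ∀ t, 1 ≤ t → ∀ ω : Ω,
      f (t + 1) ω = f t ω - (η t * φ' (((zs t ω).2 : Y) : ℝ) ⟪f t ω, K (zs t ω).1⟫) • K (zs t ω).1)
    (hη0 : Tendsto η atTop (nhds 0)) :
    ∃ C γ : ℝ, 0 < C ∧ 0 < γ ∧ ∀ t : ℕ, 1 ≤ t →
      (∫ ω, ‖f t ω - fH‖ ^ 2 ∂P) ≤ C + γ * ∑ k ∈ Finset.Icc 1 t, η k ^ 2 ∧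
        ((∫ ω, E (f t ω) ∂P) - E fH) ^ 2 / (C + γ * ∑ k ∈ Finset.Icc 1 t, η k ^ 2)
          ≤ ∫ ω, ‖∫ z : X × Y, φ' (z.2 : ℝ) ⟪f t ω, K z.1⟫ • K z.1 ∂ρ‖ ^ 2 ∂P :=
  iterate_moment_bounds_in_expectation_general K hKmeas κ hκ L α hL hα φ φ' hφmeas hφ'meas hφnonneg
    hφconv hφderiv hφholder ρ E hE hEint hgint fH hmin M0 hM0 P zs hzmeas hzdist hziid η hηpos f hf1
    hfrec hη0
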